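/- Let {P_x^{(θ)}} be a complete set of mutually unbiased measurements with efficiency κ on a d-dimensional Hilbert space H_A (d ≥ 2), and let X̃ be any Hermitian operator on H_A ⊗ H_B satisfying that Tr_A[X̃]² has trace equal to Tr[(Tr_A X̃)²]. Then ∑_{θ=1}^{d+1} ∑_{x=1}^{d} Tr_B[ (Tr_A[(P_x^{(θ)} ⊗ I_B) X̃])² ] = f(κ)·Tr_B[(Tr_A X̃)²] + g(κ)·Tr[X̃²], where f(κ) = 1 + (1−κ)/(d−1) and g(κ) = (κd−1)/(d−1). -/
import Mathlib


open Matrix Kronecker BigOperators Complex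
open scoped ComplexOrder

noncomputable section

/-! ### Auxiliary lemmas -/

lemma trace_conjTranspose_mul_self_eq_zero_imp {n : Type*} [Fintype n] [DecidableEq n]
    {T : Matrix n n ℂ} (h : (Tᴴ * T).trace = 0) : T = 0 := by
  have h2 : (((∑ j, ∑ i, Complex.normSq (T i j) : ℝ)) : ℂ) = 0 := by
    rw [← h]
    simp [Matrix.trace, Matrix.mul_apply, Matrix.conjTranspose_apply, Matrix.diag,
      ← Complex.normSq_eq_conj_mul_self]
  rw [Complex.ofReal_eq_zero] at h2
  have h3 := (Finset.sum_eq_zero_iff_of_nonneg (fun j _ => Finset.sum_nonneg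
    (fun i _ => Complex.normSq_nonneg _))).1 h2
  ext i j
  have := (Finset.sum_eq_zero_iff_of_nonneg (fun i _ => Complex.normSq_nonneg _)).1
    (h3 j (Finset.mem_univ _)) i (Finset.mem_univ _)
  simpa [Complex.normSq_eq_zero] using this

/-- The swap (flip) operator on `H_A ⊗ H_A`. -/
def swapM (d : ℕ) : Matrix (Fin d × Fin d) (Fin d × Fin d) ℂ :=
  Matrix.of fun p q => if p.1 = q.2 ∧ p.2 = q.1 then 1 else 0

variable {d n : ℕ}

lemma sum_swap_right (f : Fin d × Fin d → ℂ) (p : Fin d × Fin d) :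
    ∑ q, f q * swapM d q p = f (p.2, p.1) := by
  rw [Finset.sum_eq_single (p.2, p.1)]
  · simp [swapM]
  · intro q _ hq
    have : ¬(q.1 = p.2 ∧ q.2 = p.1) := by
      rintro ⟨h1, h2⟩; exact hq (Prod.ext h1 h2)
    simp [swapM, this]
  · simp

lemma sum_swap_left (f : Fin d × Fin d → ℂ) (p : Fin d × Fin d) :
    ∑ q, swapM d p q * f q = f (p.2, p.1) := by
  rw [Finset.sum_eq_single (p.2, p.1)]
  · simp [swapM]
  · intro q _ hq
    have : ¬(p.1 = q.2 ∧ p.2 = q.1) := by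
      rintro ⟨h1, h2⟩; exact hq (Prod.ext h2.symm h1.symm)
    simp [swapM, this]
  · simp

lemma swapM_conjTranspose : (swapM d)ᴴ = swapM d := by
  ext p q
  simp only [swapM, Matrix.conjTranspose_apply, Matrix.of_apply]
  by_cases h : p.1 = q.2 ∧ p.2 = q.1
  · rw [if_pos h, if_pos ⟨h.2.symm, h.1.symm⟩]; simp
  · rw [if_neg h, if_neg (fun hc => h ⟨hc.2.symm, hc.1.symm⟩)]; simp

lemma swapM_trace : (swapM d).trace = (d : ℂ) := by
  simp [Matrix.trace, swapM, Matrix.diag, Fintype.sum_prod_type, ite_and, Finset.sum_ite_eq]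

lemma swapM_mul_swapM : swapM d * swapM d = 1 := by
  ext p q
  rw [Matrix.mul_apply, sum_swap_left (fun q' => swapM d q' q) p]
  simp [swapM, Matrix.one_apply, Prod.ext_iff, and_comm]

lemma trace_mul_swap (M : Matrix (Fin d × Fin d) (Fin d × Fin d) ℂ) :
    (M * swapM d).trace = ∑ p : Fin d × Fin d, M p (p.2, p.1) := by
  simp only [Matrix.trace, Matrix.diag, Matrix.mul_apply]
  exact Finset.sum_congr rfl fun p _ => sum_swap_right (fun q => M p q) p

lemma trace_kron_swap (A B : Matrix (Fin d) (Fin d) ℂ) :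
    ((A ⊗ₖ B) * swapM d).trace = (A * B).trace := by
  rw [trace_mul_swap]
  simp [Matrix.trace, Matrix.diag, Matrix.mul_apply, Fintype.sum_prod_type,
    Matrix.kroneckerMap_apply]

lemma kron_conjTranspose (A B : Matrix (Fin d) (Fin d) ℂ) :
    (A ⊗ₖ B)ᴴ = Aᴴ ⊗ₖ Bᴴ := by
  ext p q
  simp [Matrix.conjTranspose_apply, Matrix.kroneckerMap_apply]

lemma sum_ite_const (θ : Fin n) (D O : ℂ) :
    ∑ θ' : Fin n, (if θ = θ' then D else O) = D + ((n : ℂ) - 1) * O := by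
  have h : ∀ θ' : Fin n, (if θ = θ' then D else O) = O + (if θ = θ' then D - O else 0) := by
    intro θ'; split <;> ring
  simp only [h, Finset.sum_add_distrib, Finset.sum_ite_eq, Finset.mem_univ, if_true,
    Finset.sum_const, Finset.card_univ, Fintype.card_fin, nsmul_eq_mul]
  ring

lemma sc2 {α β : Type*} [Fintype α] [Fintype β] (f : α → β → ℂ) :
    ∑ a, ∑ b, f a b = ∑ b, ∑ a, f a b := Finset.sum_comm

/-! ### The conical 2-design identity for MUMs -/

lemma design (hd : 2 ≤ d) (κ : ℝ)
    (P : Fin (d+1) → Fin d → Matrix (Fin d) (Fin d) ℂ)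
    (hherm : ∀ θ x, (P θ x).IsHermitian)
    (hTr : ∀ θ x, (P θ x).trace = 1)
    (hUnbiased : ∀ θ θ', θ ≠ θ' → ∀ x y, (P θ x * P θ' y).trace = 1 / (d : ℂ))
    (hSame : ∀ θ x x', (P θ x * P θ x').trace =
      if x = x' then (κ : ℂ) else ((1 - κ) / ((d : ℝ) - 1) : ℝ)) :
    ∑ θ, ∑ x, (P θ x ⊗ₖ P θ x) =
      ((1 + (1 - κ) / ((d : ℝ) - 1) : ℝ) : ℂ) • (1 : Matrix (Fin d × Fin d) (Fin d × Fin d) ℂ)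
      + (((κ * d - 1) / ((d : ℝ) - 1) : ℝ) : ℂ) • swapM d := by
  have hd0 : (d : ℂ) ≠ 0 := by
    exact_mod_cast Nat.cast_ne_zero.2 (by omega)
  have hd1 : (d : ℂ) - 1 ≠ 0 := by
    have : (d : ℂ) ≠ 1 := by exact_mod_cast (by omega : d ≠ 1)
    exact sub_ne_zero.2 this
  set c : ℂ := (((1 - κ) / ((d : ℝ) - 1) : ℝ) : ℂ) with hc
  set f : ℂ := ((1 + (1 - κ) / ((d : ℝ) - 1) : ℝ) : ℂ) with hf
  set g : ℂ := (((κ * d - 1) / ((d : ℝ) - 1) : ℝ) : ℂ) with hg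
  set S : Matrix (Fin d × Fin d) (Fin d × Fin d) ℂ := ∑ θ, ∑ x, (P θ x ⊗ₖ P θ x) with hS
  set C : Matrix (Fin d × Fin d) (Fin d × Fin d) ℂ := f • 1 + g • swapM d with hC
  have htrS : S.trace = ((d : ℂ) + 1) * d := by
    rw [hS, Matrix.trace_sum]
    simp only [Matrix.trace_sum, Matrix.trace_kronecker, hTr]
    simp [Finset.sum_const, Finset.card_univ]
  have htrSF : (S * swapM d).trace = ((d : ℂ) + 1) * d * κ := by
    rw [hS, Finset.sum_mul, Matrix.trace_sum]
    have h1 : ∀ θ : Fin (d+1), ((∑ x, (P θ x ⊗ₖ P θ x)) * swapM d).trace = (d : ℂ) * κ := by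
      intro θ
      rw [Finset.sum_mul, Matrix.trace_sum]
      have : ∀ x : Fin d, ((P θ x ⊗ₖ P θ x) * swapM d).trace = κ := by
        intro x
        rw [trace_kron_swap]
        simpa using hSame θ x x
      simp [this, Finset.sum_const, Finset.card_univ, mul_comm]
    simp [h1, Finset.sum_const, Finset.card_univ]
    ring
  have hsq : ∀ (a b : ℂ) (p : Prop) [Decidable p],
      (if p then a else b) * (if p then a else b) = if p then a * a else b * b := by
    intro a b p _; split <;> ring
  have hterm : ∀ (θ θ' : Fin (d+1)) (x y : Fin d),
      ((P θ x ⊗ₖ P θ x) * (P θ' y ⊗ₖ P θ' y)).trace =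
      (P θ x * P θ' y).trace * (P θ x * P θ' y).trace := by
    intros; rw [← Matrix.mul_kronecker_mul, Matrix.trace_kronecker]
  have inner : ∀ θ θ' : Fin (d+1),
      ((∑ x, (P θ x ⊗ₖ P θ x)) * (∑ y, (P θ' y ⊗ₖ P θ' y))).trace =
      if θ = θ' then (d : ℂ) * ((κ:ℂ) * κ) + (d : ℂ) * (((d : ℂ) - 1) * (c * c))
      else (d : ℂ) * ((d : ℂ) * (1 / (d : ℂ) * (1 / (d : ℂ)))) := by
    intro θ θ'
    rw [Finset.sum_mul_sum]
    simp only [Matrix.trace_sum, hterm]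
    by_cases hθ : θ = θ'
    · subst hθ
      simp only [if_pos rfl]
      have h2 : ∀ x y : Fin d, (P θ x * P θ y).trace * (P θ x * P θ y).trace =
          if x = y then (κ:ℂ) * κ else c * c := by
        intro x y; rw [hSame, hsq]
      simp only [h2, sum_ite_const, Fintype.card_fin]
      simp [Finset.sum_const, Finset.card_univ, Finset.mul_sum]
    · simp only [if_neg hθ]
      have h2 : ∀ x y : Fin d, (P θ x * P θ' y).trace * (P θ x * P θ' y).trace =
          1 / (d:ℂ) * (1 / (d:ℂ)) := by
        intro x y; rw [hUnbiased θ θ' hθ]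
      simp only [h2, Finset.sum_const, Finset.card_univ, Fintype.card_fin, nsmul_eq_mul]
  have htrSS : (S * S).trace =
      ((d : ℂ) + 1) * ((d : ℂ) * ((κ:ℂ) * κ) + (d : ℂ) * (((d : ℂ) - 1) * (c * c)))
      + ((d : ℂ) + 1) * (d : ℂ) * ((d : ℂ) * ((d : ℂ) * (1 / (d : ℂ) * (1 / (d : ℂ))))) := by
    nth_rewrite 1 [hS]
    rw [Finset.sum_mul, Matrix.trace_sum]
    have h1 : ∀ θ : Fin (d+1), ((∑ x, (P θ x ⊗ₖ P θ x)) * S).trace =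
        ((d : ℂ) * ((κ:ℂ) * κ) + (d : ℂ) * (((d : ℂ) - 1) * (c * c)))
        + (d : ℂ) * ((d : ℂ) * ((d : ℂ) * (1 / (d : ℂ) * (1 / (d : ℂ))))) := by
      intro θ
      rw [hS, Matrix.mul_sum, Matrix.trace_sum]
      simp only [inner θ, sum_ite_const]
      push_cast
      ring
    simp only [h1, Finset.sum_const, Finset.card_univ, Fintype.card_fin, nsmul_eq_mul]
    push_cast
    ring
  have hSH : Sᴴ = S := by
    rw [hS, Matrix.conjTranspose_sum]
    refine Finset.sum_congr rfl fun θ _ => ?_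
    rw [Matrix.conjTranspose_sum]
    refine Finset.sum_congr rfl fun x _ => ?_
    rw [kron_conjTranspose, (hherm θ x).eq]
  have hfs : star f = f := by rw [hf, RCLike.star_def, Complex.conj_ofReal]
  have hgs : star g = g := by rw [hg, RCLike.star_def, Complex.conj_ofReal]
  have hCH : Cᴴ = C := by
    rw [hC, Matrix.conjTranspose_add, Matrix.conjTranspose_smul, Matrix.conjTranspose_smul,
      Matrix.conjTranspose_one, swapM_conjTranspose, hfs, hgs]
  have htrSC : (S * C).trace = f * (((d : ℂ) + 1) * d) + g * (((d : ℂ) + 1) * d * κ) := by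
    rw [hC, Matrix.mul_add, Matrix.trace_add, Matrix.mul_smul, Matrix.mul_smul,
      Matrix.trace_smul, Matrix.trace_smul, Matrix.mul_one, htrS, htrSF]
    simp
  have htrCC : (C * C).trace =
      f * f * ((d : ℂ) * d) + 2 * (f * g) * d + g * g * ((d : ℂ) * d) := by
    rw [hC]
    simp only [Matrix.add_mul, Matrix.mul_add, Matrix.smul_mul, Matrix.mul_smul, smul_smul,
      Matrix.one_mul, Matrix.mul_one, swapM_mul_swapM, Matrix.trace_add, Matrix.trace_smul,
      Matrix.trace_one, swapM_trace, smul_eq_mul, Fintype.card_prod, Fintype.card_fin]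
    push_cast
    ring
  have hTzero : S - C = 0 := by
    apply trace_conjTranspose_mul_self_eq_zero_imp
    rw [Matrix.conjTranspose_sub, hSH, hCH]
    rw [Matrix.sub_mul, Matrix.mul_sub, Matrix.mul_sub, Matrix.trace_sub, Matrix.trace_sub,
      Matrix.trace_sub, htrSS, htrCC, trace_mul_comm C S, htrSC]
    rw [hf, hg, hc]
    push_cast
    field_simp
    ring
  exact sub_eq_zero.mp hTzero

/-- Partial trace over the `A` factor. -/
def ptraceA (dA dB : ℕ) (X : Matrix (Fin dA × Fin dB) (Fin dA × Fin dB) ℂ) :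
    Matrix (Fin dB) (Fin dB) ℂ :=
  fun b b' => ∑ a, X (a, b) (a, b')

/-! ### Expansion machinery -/

variable {dA dB : ℕ}

/-- the bilinear kernel -/
def W (X : Matrix (Fin dA × Fin dB) (Fin dA × Fin dB) ℂ)
    (p q : Fin dA × Fin dA) : ℂ :=
  ∑ β : Fin dB × Fin dB, X (q.1, β.1) (p.1, β.2) * X (q.2, β.2) (p.2, β.1)

variable (X : Matrix (Fin dA × Fin dB) (Fin dA × Fin dB) ℂ)

lemma hY (M : Matrix (Fin dA) (Fin dA) ℂ) (b b' : Fin dB) :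
    ptraceA dA dB ((M ⊗ₖ (1 : Matrix (Fin dB) (Fin dB) ℂ)) * X) b b'
      = ∑ p : Fin dA × Fin dA, M p.1 p.2 * X (p.2, b) (p.1, b') := by
  simp only [ptraceA, Matrix.mul_apply, Fintype.sum_prod_type, Matrix.kroneckerMap_apply,
    Matrix.one_apply, mul_ite, mul_one, mul_zero, ite_mul, zero_mul,
    Finset.sum_ite_eq, Finset.sum_ite_eq', Finset.mem_univ, if_true]

lemma expand1 (M : Matrix (Fin dA) (Fin dA) ℂ) :
    (ptraceA dA dB ((M ⊗ₖ (1 : Matrix (Fin dB) (Fin dB) ℂ)) * X) *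
      ptraceA dA dB ((M ⊗ₖ (1 : Matrix (Fin dB) (Fin dB) ℂ)) * X)).trace
    = ∑ z : (Fin dA × Fin dA) × (Fin dA × Fin dA), (M ⊗ₖ M) z.1 z.2 * W X z.1 z.2 := by
  have step1 : (ptraceA dA dB ((M ⊗ₖ (1 : Matrix (Fin dB) (Fin dB) ℂ)) * X) *
      ptraceA dA dB ((M ⊗ₖ (1 : Matrix (Fin dB) (Fin dB) ℂ)) * X)).trace
      = ∑ b : Fin dB, ∑ b' : Fin dB, ∑ p : Fin dA × Fin dA, ∑ q : Fin dA × Fin dA,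
          (M p.1 p.2 * X (p.2, b) (p.1, b')) * (M q.1 q.2 * X (q.2, b') (q.1, b)) := by
    simp only [Matrix.trace, Matrix.diag, Matrix.mul_apply, hY, Finset.sum_mul_sum]
  rw [step1]
  conv_lhs => enter [2, b]; rw [sc2]
  rw [sc2]
  conv_lhs => enter [2, p, 2, b]; rw [sc2]
  conv_lhs => enter [2, p]; rw [sc2]
  have hgroup : (∑ p : Fin dA × Fin dA, ∑ q : Fin dA × Fin dA, ∑ b : Fin dB, ∑ b' : Fin dB,
        (M p.1 p.2 * X (p.2, b) (p.1, b')) * (M q.1 q.2 * X (q.2, b') (q.1, b)))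
      = ∑ z : (Fin dA × Fin dA) × (Fin dA × Fin dA), ∑ b : Fin dB, ∑ b' : Fin dB,
        (M z.1.1 z.1.2 * X (z.1.2, b) (z.1.1, b')) * (M z.2.1 z.2.2 * X (z.2.2, b') (z.2.1, b)) :=
    (Fintype.sum_prod_type (f := fun z : (Fin dA × Fin dA) × (Fin dA × Fin dA) =>
      ∑ b : Fin dB, ∑ b' : Fin dB,
        (M z.1.1 z.1.2 * X (z.1.2, b) (z.1.1, b')) *
          (M z.2.1 z.2.2 * X (z.2.2, b') (z.2.1, b)))).symm
  rw [hgroup]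
  refine Fintype.sum_equiv (Equiv.prodProdProdComm (Fin dA) (Fin dA) (Fin dA) (Fin dA)) _ _ ?_
  rintro ⟨⟨a1, c1⟩, ⟨a2, c2⟩⟩
  simp only [Equiv.prodProdProdComm_apply, Matrix.kroneckerMap_apply, W, Finset.mul_sum,
    Fintype.sum_prod_type]
  refine Finset.sum_congr rfl fun b _ => Finset.sum_congr rfl fun b' _ => ?_
  ring

lemma sumW_diag :
    ∑ z : (Fin dA × Fin dA) × (Fin dA × Fin dA),
      (1 : Matrix (Fin dA × Fin dA) (Fin dA × Fin dA) ℂ) z.1 z.2 * W X z.1 z.2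
    = (ptraceA dA dB X * ptraceA dA dB X).trace := by
  rw [Fintype.sum_prod_type]
  simp only [Matrix.one_apply, ite_mul, one_mul, zero_mul, Finset.sum_ite_eq,
    Finset.mem_univ, if_true]
  have h1 : (∑ u : Fin dA × Fin dA, W X u u)
      = ∑ a1 : Fin dA, ∑ a2 : Fin dA, ∑ b : Fin dB, ∑ b' : Fin dB,
        X (a1, b) (a1, b') * X (a2, b') (a2, b) := by
    rw [Fintype.sum_prod_type (f := fun u : Fin dA × Fin dA => W X u u)]
    refine Finset.sum_congr rfl fun a1 _ => Finset.sum_congr rfl fun a2 _ => ?_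
    rw [W, Fintype.sum_prod_type]
  rw [h1]
  have h2 : (ptraceA dA dB X * ptraceA dA dB X).trace
      = ∑ b : Fin dB, ∑ b' : Fin dB, ∑ a1 : Fin dA, ∑ a2 : Fin dA,
        X (a1, b) (a1, b') * X (a2, b') (a2, b) := by
    simp only [Matrix.trace, Matrix.diag, Matrix.mul_apply, ptraceA, Finset.sum_mul_sum]
  rw [h2]
  conv_lhs => enter [2, a1]; rw [sc2]
  rw [sc2]
  conv_lhs => enter [2, b, 2, a1]; rw [sc2]
  conv_lhs => enter [2, b]; rw [sc2]

lemma sumW_swap :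
    ∑ z : (Fin dA × Fin dA) × (Fin dA × Fin dA),
      swapM dA z.1 z.2 * W X z.1 z.2 = (X * X).trace := by
  rw [Fintype.sum_prod_type]
  have h1 : ∀ u : Fin dA × Fin dA, (∑ v, swapM dA u v * W X u v) = W X u (u.2, u.1) :=
    fun u => sum_swap_left (W X u) u
  simp only [h1]
  have h2 : (X * X).trace = ∑ t : (Fin dA × Fin dB) × (Fin dA × Fin dB),
      X t.1 t.2 * X t.2 t.1 := by
    rw [Fintype.sum_prod_type]
    simp only [Matrix.trace, Matrix.diag, Matrix.mul_apply]
  rw [h2]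
  have hgroup : (∑ u : Fin dA × Fin dA, W X u (u.2, u.1))
      = ∑ s : (Fin dA × Fin dA) × (Fin dB × Fin dB),
        X (s.1.2, s.2.1) (s.1.1, s.2.2) * X (s.1.1, s.2.2) (s.1.2, s.2.1) := by
    rw [Fintype.sum_prod_type (f := fun s : (Fin dA × Fin dA) × (Fin dB × Fin dB) =>
      X (s.1.2, s.2.1) (s.1.1, s.2.2) * X (s.1.1, s.2.2) (s.1.2, s.2.1))]
    refine Finset.sum_congr rfl fun u _ => ?_
    rw [W]
  rw [hgroup]
  exact Fintype.sum_equiv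
    (Equiv.mk (fun s => ((s.1.2, s.2.1), (s.1.1, s.2.2)))
      (fun t => ((t.2.1, t.1.1), (t.1.2, t.2.2)))
      (by rintro ⟨⟨a, b⟩, ⟨c, e⟩⟩; rfl) (by rintro ⟨⟨a, b⟩, ⟨c, e⟩⟩; rfl))
    _ _ (by rintro ⟨⟨a1, a2⟩, ⟨b, b'⟩⟩; rfl)

theorem stmt7 (dA dB : ℕ) (hd : 2 ≤ dA) (κ : ℝ) (hκ1 : 1 / (dA : ℝ) < κ) (hκ2 : κ ≤ 1)
    (P : Fin (dA + 1) → Fin dA → Matrix (Fin dA) (Fin dA) ℂ)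
    (hPos : ∀ θ x, (P θ x).PosSemidef)
    (hPOVM : ∀ θ, ∑ x, P θ x = 1)
    (hTr : ∀ θ x, (P θ x).trace = 1)
    (hUnbiased : ∀ θ θ', θ ≠ θ' → ∀ x y, (P θ x * P θ' y).trace = 1 / (dA : ℂ))
    (hSame : ∀ θ x x', (P θ x * P θ x').trace =
      if x = x' then (κ : ℂ) else ((1 - κ) / ((dA : ℝ) - 1) : ℝ))
    (X : Matrix (Fin dA × Fin dB) (Fin dA × Fin dB) ℂ) (hX : X.IsHermitian) :
    ∑ θ : Fin (dA + 1), ∑ x : Fin dA,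
        (ptraceA dA dB (((P θ x) ⊗ₖ (1 : Matrix (Fin dB) (Fin dB) ℂ)) * X) *
          ptraceA dA dB (((P θ x) ⊗ₖ (1 : Matrix (Fin dB) (Fin dB) ℂ)) * X)).trace =
      ((1 + (1 - κ) / ((dA : ℝ) - 1) : ℝ) : ℂ) *
          (ptraceA dA dB X * ptraceA dA dB X).trace
        + (((κ * dA - 1) / ((dA : ℝ) - 1) : ℝ) : ℂ) * (X * X).trace := by
  have hherm : ∀ θ x, (P θ x).IsHermitian := fun θ x => (hPos θ x).1
  have hdesign := design hd κ P hherm hTr hUnbiased hSame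
  set f : ℂ := ((1 + (1 - κ) / ((dA : ℝ) - 1) : ℝ) : ℂ) with hf
  set g : ℂ := (((κ * dA - 1) / ((dA : ℝ) - 1) : ℝ) : ℂ) with hg
  simp only [expand1 X]
  -- reorder (θ, x, z) -> (z, θ, x)
  conv_lhs => enter [2, θ]; rw [sc2]
  rw [sc2]
  have hz : ∀ z : (Fin dA × Fin dA) × (Fin dA × Fin dA),
      (∑ θ : Fin (dA + 1), ∑ x : Fin dA, (P θ x ⊗ₖ P θ x) z.1 z.2 * W X z.1 z.2)
      = (f • (1 : Matrix (Fin dA × Fin dA) (Fin dA × Fin dA) ℂ) + g • swapM dA) z.1 z.2 *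
          W X z.1 z.2 := by
    intro z
    have hsum : (∑ θ : Fin (dA + 1), ∑ x : Fin dA, (P θ x ⊗ₖ P θ x) z.1 z.2)
        = (f • (1 : Matrix (Fin dA × Fin dA) (Fin dA × Fin dA) ℂ) + g • swapM dA) z.1 z.2 := by
      rw [← hdesign]
      simp [Matrix.sum_apply]
    rw [← hsum, Finset.sum_mul]
    refine Finset.sum_congr rfl fun θ _ => ?_
    rw [Finset.sum_mul]
  simp only [hz]
  simp only [Matrix.add_apply, Matrix.smul_apply, smul_eq_mul, add_mul, mul_assoc,
    Finset.sum_add_distrib, ← Finset.mul_sum]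
  rw [sumW_diag, sumW_swap]
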